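/- With Δ(O) as the uncentered efficient influence function of the instrumented DiD CATE, E[Δ(O) | X] = δ_Y(X)/δ_A(X) whenever the functions π, μ_A, μ_Y used in Δ are the true conditional functionals. That is, E[(2Z−1)(2T−1)/(π(T,Z,X)δ_A(X)) · {Y − μ_Y(T,Z,X) − (δ_Y(X)/δ_A(X))(A − μ_A(T,Z,X))} | X] = 0. -/

import Mathlib

/-!
Put `τ = δ_Y/δ_A` and `C = Y − τ·A`. Cell means are linear, so the correction term of `Δ` is
`w(T,Z) · (C − μ_C(T,Z))` for a weight `w` that depends only on the cell `(T,Z)`. Splitting the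
integral over the four cells `{T = t, Z = z}`, each piece is `w(t,z)` times the integral over the
cell of `C` minus its conditional mean on that cell, which is zero.
-/

open MeasureTheory ProbabilityTheory

/-- `{0,1}`-coding of a Boolean. -/
noncomputable def bi (b : Bool) : ℝ := if b then 1 else 0

/-- Sign coding `2b − 1` of a Boolean. -/
noncomputable def sg (b : Bool) : ℝ := if b then 1 else -1

/-- Conditional-cell probability `π(t,z,x) = Pr(T=t, Z=z | X=x)` (with `X = x` implicit in
the measure `μ`, the conditional law of the data given `X = x`). -/
noncomputable def cellP {Ω : Type*} [MeasurableSpace Ω] (μ : Measure Ω)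
    (T Z : Ω → Bool) (t z : Bool) : ℝ := (μ {ω | T ω = t ∧ Z ω = z}).toReal

/-- Conditional-cell mean `μ_C(t,z,x) = E[C | T=t, Z=z, X=x]`. -/
noncomputable def cellE {Ω : Type*} [MeasurableSpace Ω] (μ : Measure Ω)
    (T Z : Ω → Bool) (C : Ω → ℝ) (t z : Bool) : ℝ :=
  ∫ ω, C ω ∂(μ[|{ω | T ω = t ∧ Z ω = z}])

/-- Double difference `δ_C(x) = μ_C(1,1,x) − μ_C(0,1,x) − μ_C(1,0,x) + μ_C(0,0,x)`. -/
noncomputable def dd (m : Bool → Bool → ℝ) : ℝ :=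
  m true true - m false true - m true false + m false false

namespace MeasureTheory

variable {Ω E ι : Type*} [MeasurableSpace Ω] {μ : Measure Ω} [NormedAddCommGroup E]
  [Fintype ι] [MeasurableSpace ι] [MeasurableSingletonClass ι] {K : Ω → ι} {h : ι → Ω → E}

theorem Integrable.cond [IsFiniteMeasure μ] {f : Ω → E} (hf : Integrable f μ) (s : Set Ω) :
    Integrable f μ[|s] := by
  by_cases hs : μ s = 0
  · simp [cond_eq_zero_of_meas_eq_zero hs]
  · exact hf.restrict.smul_measure (ENNReal.inv_ne_top.2 hs)

theorem integrable_fiberwise (hK : Measurable K) (hh : ∀ i, Integrable (h i) μ) :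
    Integrable (fun ω => h (K ω) ω) μ := by
  rw [← integrableOn_univ, ← Set.preimage_univ (f := K), ← Set.iUnion_of_singleton,
    Set.preimage_iUnion, integrableOn_finite_iUnion]
  exact fun i => (hh i).integrableOn.congr_fun (fun ω hω => by rw [hω]) (hK (.singleton i))

variable [NormedSpace ℝ E]

theorem integral_fiberwise_eq_sum (hK : Measurable K) (hh : ∀ i, Integrable (h i) μ) :
    ∫ ω, h (K ω) ω ∂μ = ∑ i, ∫ ω in K ⁻¹' {i}, h i ω ∂μ := by
  rw [← setIntegral_univ, ← Set.preimage_univ (f := K), ← Set.iUnion_of_singleton,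
    Set.preimage_iUnion, integral_iUnion_fintype (fun i => hK (.singleton i))
      (fun i j hij => Set.disjoint_left.2 fun _ hi hj => hij (hi.symm.trans hj))
      (fun i => (integrable_fiberwise hK hh).integrableOn)]
  exact Finset.sum_congr rfl fun i _ =>
    setIntegral_congr_fun (hK (.singleton i)) fun ω hω => by rw [hω]

variable [IsFiniteMeasure μ]

theorem setIntegral_eq_measureReal_smul_integral_cond (s : Set Ω) (f : Ω → E) :
    ∫ x in s, f x ∂μ = μ.real s • ∫ x, f x ∂μ[|s] := by
  by_cases hs : μ s = 0
  · simp [Measure.restrict_eq_zero.2 hs, measureReal_def, hs]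
  · rw [ProbabilityTheory.cond, integral_smul_measure, ENNReal.toReal_inv, ← measureReal_def,
      smul_inv_smul₀ ((measureReal_ne_zero_iff (measure_ne_top μ s)).2 hs)]

theorem setIntegral_sub_integral_cond_eq_zero [CompleteSpace E] {f : Ω → E}
    (hf : Integrable f μ) (s : Set Ω) :
    ∫ x in s, (f x - ∫ y, f y ∂μ[|s]) ∂μ = 0 := by
  rw [integral_sub hf.integrableOn (integrable_const _), setIntegral_const,
    setIntegral_eq_measureReal_smul_integral_cond, sub_self]

end MeasureTheory

section Cells

variable {Ω : Type*} [MeasurableSpace Ω] {μ : Measure Ω} {T Z : Ω → Bool}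

theorem cellE_eq_integral_cond_preimage (C : Ω → ℝ) (t z : Bool) :
    cellE μ T Z C t z = ∫ ω, C ω ∂μ[|(fun ω => (T ω, Z ω)) ⁻¹' {(t, z)}] := by
  simp [cellE, Set.preimage]

variable [IsFiniteMeasure μ]

theorem cellE_sub_const_mul {Y B : Ω → ℝ} (hY : Integrable Y μ) (hB : Integrable B μ) (r : ℝ)
    (t z : Bool) :
    cellE μ T Z (fun ω => Y ω - r * B ω) t z = cellE μ T Z Y t z - r * cellE μ T Z B t z := by
  rw [cellE, integral_sub (hY.cond _) ((hB.cond _).const_mul r), integral_const_mul]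
  rfl

variable (hT : Measurable T) (hZ : Measurable Z) {C : Ω → ℝ} (hC : Integrable C μ)
  (w : Bool → Bool → ℝ)
include hT hZ hC

theorem integrable_mul_sub_cellE :
    Integrable (fun ω => w (T ω) (Z ω) * (C ω - cellE μ T Z C (T ω) (Z ω))) μ :=
  integrable_fiberwise (K := fun ω => (T ω, Z ω)) (hT.prodMk hZ)
    (h := fun p ω => w p.1 p.2 * (C ω - cellE μ T Z C p.1 p.2))
    fun _ => (hC.sub (integrable_const _)).const_mul _

theorem integral_mul_sub_cellE_eq_zero :
    ∫ ω, w (T ω) (Z ω) * (C ω - cellE μ T Z C (T ω) (Z ω)) ∂μ = 0 := by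
  rw [integral_fiberwise_eq_sum (K := fun ω => (T ω, Z ω)) (hT.prodMk hZ)
    (h := fun p ω => w p.1 p.2 * (C ω - cellE μ T Z C p.1 p.2))
    fun _ => (hC.sub (integrable_const _)).const_mul _]
  refine Finset.sum_eq_zero fun p _ => ?_
  rw [integral_const_mul, cellE_eq_integral_cond_preimage,
    setIntegral_sub_integral_cond_eq_zero hC, mul_zero]

end Cells

section InstrumentedDiD

variable {Ω : Type*} [MeasurableSpace Ω] (μ : Measure Ω) (T Z A : Ω → Bool) (Y : Ω → ℝ)

noncomputable def cate : ℝ :=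
  dd (cellE μ T Z Y) / dd (cellE μ T Z (fun ω => bi (A ω)))

noncomputable def cellWeight (t z : Bool) : ℝ :=
  sg z * sg t / (cellP μ T Z t z * dd (cellE μ T Z (fun ω => bi (A ω))))

-- `Δ(O) = cate + eifCorrection O`
noncomputable def eifCorrection (ω : Ω) : ℝ :=
  cellWeight μ T Z A (T ω) (Z ω) * (Y ω - cellE μ T Z Y (T ω) (Z ω)
    - cate μ T Z A Y * (bi (A ω) - cellE μ T Z (fun ω' => bi (A ω')) (T ω) (Z ω)))

variable {μ T Z A Y}

theorem eifCorrection_eq [IsFiniteMeasure μ] (hY : Integrable Y μ)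
    (hA : Integrable (fun ω => bi (A ω)) μ) :
    eifCorrection μ T Z A Y = fun ω => cellWeight μ T Z A (T ω) (Z ω) *
      ((Y ω - cate μ T Z A Y * bi (A ω))
        - cellE μ T Z (fun ω' => Y ω' - cate μ T Z A Y * bi (A ω')) (T ω) (Z ω)) := by
  funext ω
  rw [eifCorrection, cellE_sub_const_mul hY hA]
  ring

end InstrumentedDiD

theorem integrable_bi_comp {Ω : Type*} [MeasurableSpace Ω] {μ : Measure Ω} [IsFiniteMeasure μ]
    {A : Ω → Bool} (hA : Measurable A) : Integrable (fun ω => bi (A ω)) μ :=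
  .of_bound ((Measurable.of_discrete (f := bi)).comp hA).aestronglyMeasurable 1
    (.of_forall fun ω => by cases A ω <;> simp [bi])

theorem stmt4_general {Ω : Type*} [MeasurableSpace Ω] (μ : Measure Ω) [IsProbabilityMeasure μ]
    (T Z A : Ω → Bool) (Y : Ω → ℝ)
    (hmT : Measurable T) (hmZ : Measurable Z) (hmA : Measurable A)
    (hiY : Integrable Y μ) :
    (∫ ω, sg (Z ω) * sg (T ω)
        / (cellP μ T Z (T ω) (Z ω) * dd (cellE μ T Z (fun ω' => bi (A ω'))))
        * (Y ω - cellE μ T Z Y (T ω) (Z ω)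
            - dd (cellE μ T Z Y) / dd (cellE μ T Z (fun ω' => bi (A ω')))
              * (bi (A ω) - cellE μ T Z (fun ω' => bi (A ω')) (T ω) (Z ω))) ∂μ) = 0 ∧
    (∫ ω, (dd (cellE μ T Z Y) / dd (cellE μ T Z (fun ω' => bi (A ω')))
        + sg (Z ω) * sg (T ω)
          / (cellP μ T Z (T ω) (Z ω) * dd (cellE μ T Z (fun ω' => bi (A ω'))))
          * (Y ω - cellE μ T Z Y (T ω) (Z ω)
              - dd (cellE μ T Z Y) / dd (cellE μ T Z (fun ω' => bi (A ω')))
                * (bi (A ω) - cellE μ T Z (fun ω' => bi (A ω')) (T ω) (Z ω)))) ∂μ)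
      = dd (cellE μ T Z Y) / dd (cellE μ T Z (fun ω' => bi (A ω'))) := by
  show ∫ ω, eifCorrection μ T Z A Y ω ∂μ = 0 ∧
    ∫ ω, (cate μ T Z A Y + eifCorrection μ T Z A Y ω) ∂μ = cate μ T Z A Y
  have hA := integrable_bi_comp (μ := μ) hmA
  have hC : Integrable (fun ω => Y ω - cate μ T Z A Y * bi (A ω)) μ :=
    hiY.sub (hA.const_mul _)
  have hmean : ∫ ω, eifCorrection μ T Z A Y ω ∂μ = 0 := by
    rw [eifCorrection_eq hiY hA]
    exact integral_mul_sub_cellE_eq_zero hmT hmZ hC _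
  have hint : Integrable (eifCorrection μ T Z A Y) μ := by
    rw [eifCorrection_eq hiY hA]
    exact integrable_mul_sub_cellE hmT hmZ hC _
  refine ⟨hmean, ?_⟩
  rw [integral_add (integrable_const _) hint, hmean, integral_const, probReal_univ, one_smul,
    add_zero]

/-- with `Δ(O)` the uncentered efficient influence function of the instrumented
DiD CATE, when `π, μ_A, μ_Y` are the true conditional functionals, the correction term has
zero conditional mean given `X`; equivalently (conditionally on `X = x`, with `μ` the
conditional law given `X = x`):
`E[(2Z−1)(2T−1)/(π(T,Z,X)δ_A(X)) · {Y − μ_Y(T,Z,X) − (δ_Y(X)/δ_A(X))(A − μ_A(T,Z,X))} | X] = 0`,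
so that `E[Δ(O) | X] = δ_Y(X)/δ_A(X)`. -/
theorem stmt4 {Ω : Type*} [MeasurableSpace Ω] (μ : Measure Ω) [IsProbabilityMeasure μ]
    (T Z A : Ω → Bool) (Y : Ω → ℝ)
    (hmT : Measurable T) (hmZ : Measurable Z) (hmA : Measurable A)
    (hiY : Integrable Y μ)
    (hpos : ∀ t z, 0 < cellP μ T Z t z)
    (hδA : dd (cellE μ T Z (fun ω => bi (A ω))) ≠ 0) :
    (∫ ω, sg (Z ω) * sg (T ω)
        / (cellP μ T Z (T ω) (Z ω) * dd (cellE μ T Z (fun ω' => bi (A ω'))))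
        * (Y ω - cellE μ T Z Y (T ω) (Z ω)
            - dd (cellE μ T Z Y) / dd (cellE μ T Z (fun ω' => bi (A ω')))
              * (bi (A ω) - cellE μ T Z (fun ω' => bi (A ω')) (T ω) (Z ω))) ∂μ) = 0 ∧
    (∫ ω, (dd (cellE μ T Z Y) / dd (cellE μ T Z (fun ω' => bi (A ω')))
        + sg (Z ω) * sg (T ω)
          / (cellP μ T Z (T ω) (Z ω) * dd (cellE μ T Z (fun ω' => bi (A ω'))))
          * (Y ω - cellE μ T Z Y (T ω) (Z ω)
              - dd (cellE μ T Z Y) / dd (cellE μ T Z (fun ω' => bi (A ω')))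
                * (bi (A ω) - cellE μ T Z (fun ω' => bi (A ω')) (T ω) (Z ω)))) ∂μ)
      = dd (cellE μ T Z Y) / dd (cellE μ T Z (fun ω' => bi (A ω'))) :=
  stmt4_general μ T Z A Y hmT hmZ hmA hiY
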